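/- Let M be a left S-module which is flat as a k-module. For every integer j ≥ 1 the sequence of left S-modules 0 → c^j(M) → S ⊗_k c^{j−1}(M) → S ⊗_k c^{j−2}(M) → ⋯ → S ⊗_k c^1(M) → S ⊗_k c^0(M) → M → 0 is exact, where: the first map is the inclusion c^j(M) ⊆ S ⊗_k c^{j−1}(M); the last map is μ_M; and for 1 ≤ i ≤ j−1 the map S ⊗_k c^i(M) → S ⊗_k c^{i−1}(M) is the composite of μ_{c^i(M)} : S ⊗_k c^i(M) → c^i(M) with the inclusion c^i(M) ⊆ S ⊗_k c^{i−1}(M). Moreover every module appearing in this sequence is flat as a k-module. -/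

import Mathlib

/-!
Since `μ_N (1 ⊗ n) = n`, every multiplication map is surjective, and `n ↦ 1 ⊗ n` is a
`k`-linear section of it; hence `c(N)` is a `k`-direct summand of `S ⊗_k N`, flat when `S` and
`N` are, and by induction every `cⁱ(M)` is `k`-flat. Exactness is then local: the inclusion
`c^{i+1}(M) ⊆ S ⊗_k cⁱ(M)` is injective, so the map `S ⊗_k c^{i+1}(M) → S ⊗_k cⁱ(M)` has kernel
`ker μ_{c^{i+1}(M)} = c^{i+2}(M)` and, `μ` being onto, image `c^{i+1}(M)`.
-/

open scoped TensorProduct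
open Function

universe u v w

section SMod

variable (k : Type u) (S : Type u) [CommRing k] [Ring S] [Algebra k S]

/-- The multiplication map `S ⊗_k M → M` for a left `S`-module `M`. -/
noncomputable def mulMap (M : Type u) [AddCommGroup M] [Module k M] [Module S M]
    [IsScalarTower k S M] : S ⊗[k] M →ₗ[S] M where
  toFun := TensorProduct.lift (LinearMap.mk₂ k (fun (s : S) (m : M) => s • m)
    (fun s t m => add_smul s t m) (fun c s m => smul_assoc c s m)
    (fun s m m' => smul_add s m m') (fun c s m => (smul_comm c s m).symm))
  map_add' := map_add _
  map_smul' := fun s x => by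
    refine TensorProduct.induction_on x (by simp) (fun t m => ?_) (fun x y hx hy => ?_)
    · show TensorProduct.lift _ (s • (t ⊗ₜ[k] m)) = s • TensorProduct.lift _ (t ⊗ₜ[k] m)
      rw [TensorProduct.smul_tmul']
      simp [smul_eq_mul, mul_smul]
    · show TensorProduct.lift _ (s • (x + y)) = s • TensorProduct.lift _ (x + y)
      rw [smul_add, map_add, map_add, smul_add]
      exact congrArg₂ (· + ·) hx hy

@[simp] lemma mulMap_tmul (M : Type u) [AddCommGroup M] [Module k M] [Module S M]
    [IsScalarTower k S M] (s : S) (m : M) : mulMap k S M (s ⊗ₜ[k] m) = s • m := rfl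

/-- A bundled left `S`-module which is also a `k`-module compatibly. -/
structure SMod : Type (u + 1) where
  carrier : Type u
  [acg : AddCommGroup carrier]
  [modk : Module k carrier]
  [modS : Module S carrier]
  [tower : IsScalarTower k S carrier]

attribute [instance] SMod.acg SMod.modk SMod.modS SMod.tower

/-- The functor `c`: `c(M)` is the kernel of the multiplication map `S ⊗_k M → M`. -/
noncomputable def cstep (M : SMod k S) : SMod k S :=
  ⟨LinearMap.ker (mulMap k S M.carrier)⟩

/-- Iterates of `c` starting at the left `S`-module `S` itself: `cS k S i = cⁱ(S)`. -/
noncomputable def cS : ℕ → SMod k S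
  | 0 => ⟨S⟩
  | (i + 1) => cstep k S (cS i)

end SMod

section Statement4

variable (k S : Type u) [CommRing k] [Ring S] [Algebra k S]
variable (M : Type u) [AddCommGroup M] [Module k M] [Module S M] [IsScalarTower k S M]

/-- Iterates of `c` starting at the left `S`-module `M`: `CC k S M i = cⁱ(M)`. -/
noncomputable def CC : ℕ → SMod k S
  | 0 => ⟨M⟩
  | (i + 1) => cstep k S (CC i)

/-- The inclusion `c^{i+1}(M) = ker(μ_{cⁱ(M)}) ⊆ S ⊗_k cⁱ(M)`. -/
noncomputable def iota (i : ℕ) :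
    (CC k S M (i + 1)).carrier →ₗ[k] S ⊗[k] (CC k S M i).carrier :=
  ((LinearMap.ker (mulMap k S (CC k S M i).carrier)).subtype).restrictScalars k

/-- The modules appearing in the spliced sequence:
`E 0 = M` and `E (i+1) = S ⊗_k cⁱ(M)`. -/
noncomputable def E : ℕ → Type u
  | 0 => M
  | (i + 1) => S ⊗[k] (CC k S M i).carrier

noncomputable instance (i : ℕ) : AddCommGroup (E k S M i) := by
  cases i with
  | zero => exact inferInstanceAs (AddCommGroup M)
  | succ i => exact inferInstanceAs (AddCommGroup (S ⊗[k] (CC k S M i).carrier))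

noncomputable instance (i : ℕ) : Module k (E k S M i) := by
  cases i with
  | zero => exact inferInstanceAs (Module k M)
  | succ i => exact inferInstanceAs (Module k (S ⊗[k] (CC k S M i).carrier))

/-- The maps in the spliced sequence: `delta 0 = μ_M : S ⊗_k M → M` and, for `i ≥ 0`,
`delta (i+1) : S ⊗_k c^{i+1}(M) → S ⊗_k cⁱ(M)` is the composite of
`μ_{c^{i+1}(M)} : S ⊗_k c^{i+1}(M) → c^{i+1}(M)` with the inclusion
`c^{i+1}(M) ⊆ S ⊗_k cⁱ(M)`. -/
noncomputable def delta : ∀ i : ℕ, E k S M (i + 1) →ₗ[k] E k S M i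
  | 0 => (mulMap k S M).restrictScalars k
  | (i + 1) => (iota k S M i).comp
      ((mulMap k S (CC k S M (i + 1)).carrier).restrictScalars k)

section MulMap

variable (k S : Type u) [CommRing k] [Ring S] [Algebra k S]
  (N : Type u) [AddCommGroup N] [Module k N] [Module S N] [IsScalarTower k S N]

lemma mulMap_surjective : Surjective (mulMap k S N) :=
  fun n => ⟨1 ⊗ₜ[k] n, by simp⟩

noncomputable def kerMulMapRetraction : S ⊗[k] N →ₗ[k] LinearMap.ker (mulMap k S N) :=
  LinearMap.codRestrict ((LinearMap.ker (mulMap k S N)).restrictScalars k)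
    (LinearMap.id - (TensorProduct.mk k S N 1).comp ((mulMap k S N).restrictScalars k))
    (fun x => by simp)

lemma kerMulMapRetraction_comp_subtype :
    (kerMulMapRetraction k S N).comp
      ((LinearMap.ker (mulMap k S N)).subtype.restrictScalars k) = LinearMap.id := by
  refine LinearMap.ext fun ⟨x, hx⟩ => Subtype.ext ?_
  change x - 1 ⊗ₜ[k] mulMap k S N x = x
  rw [LinearMap.mem_ker.mp hx, TensorProduct.tmul_zero, sub_zero]

instance flat_ker_mulMap [Module.Flat k S] [Module.Flat k N] :
    Module.Flat k (LinearMap.ker (mulMap k S N)) :=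
  Module.Flat.of_retract _ _ (kerMulMapRetraction_comp_subtype k S N)

end MulMap

section Resolution

variable (k S : Type u) [CommRing k] [Ring S] [Algebra k S]
  (M : Type u) [AddCommGroup M] [Module k M] [Module S M] [IsScalarTower k S M]

lemma flat_CC [Module.Flat k S] [Module.Flat k M] (i : ℕ) :
    Module.Flat k (CC k S M i).carrier := by
  induction i with
  | zero => assumption
  | succ i ih => exact flat_ker_mulMap k S (CC k S M i).carrier

lemma iota_injective (i : ℕ) : Injective (iota k S M i) :=
  Subtype.val_injective

lemma delta_succ_apply (i : ℕ) (x : S ⊗[k] (CC k S M (i + 1)).carrier) :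
    delta k S M (i + 1) x = iota k S M i (mulMap k S _ x) :=
  rfl

lemma ker_delta_eq_range_iota (i : ℕ) :
    LinearMap.ker (delta k S M i) = LinearMap.range (iota k S M i) := by
  ext x
  cases i with
  | zero => exact ⟨fun hx => ⟨⟨x, hx⟩, rfl⟩, fun ⟨⟨_, hy⟩, hyx⟩ => hyx ▸ hy⟩
  | succ i =>
    change iota k S M i (mulMap k S _ x) = 0 ↔ _
    rw [(iota_injective k S M i).eq_iff' (map_zero _)]
    exact ⟨fun hx => ⟨⟨x, hx⟩, rfl⟩, fun ⟨⟨_, hy⟩, hyx⟩ => hyx ▸ hy⟩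

lemma range_delta_succ_eq_range_iota (i : ℕ) :
    LinearMap.range (delta k S M (i + 1)) = LinearMap.range (iota k S M i) := by
  ext x
  constructor
  · rintro ⟨y, rfl⟩
    exact ⟨_, (delta_succ_apply k S M i y).symm⟩
  · rintro ⟨y, rfl⟩
    obtain ⟨z, rfl⟩ := mulMap_surjective k S _ y
    exact ⟨z, delta_succ_apply k S M i z⟩

lemma exact_iota_delta (i : ℕ) : Exact (iota k S M i) (delta k S M i) :=
  LinearMap.exact_iff.mpr (ker_delta_eq_range_iota k S M i)

lemma exact_delta_succ_delta (i : ℕ) : Exact (delta k S M (i + 1)) (delta k S M i) := by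
  rw [LinearMap.exact_iff, ker_delta_eq_range_iota, range_delta_succ_eq_range_iota]

end Resolution

/-- Let `k` be a commutative ring, `S` a `k`-algebra flat over `k`, and
`M` a left `S`-module flat over `k`.  For every `j = m + 1 ≥ 1` the sequence
`0 → c^j(M) → S ⊗_k c^{j-1}(M) → ⋯ → S ⊗_k c^0(M) → M → 0` of left `S`-modules is
exact, and all modules appearing in it are flat over `k`. -/
theorem statement4 (k S : Type u) [CommRing k] [Ring S] [Algebra k S]
    (M : Type u) [AddCommGroup M] [Module k M] [Module S M] [IsScalarTower k S M]
    [Module.Flat k S] [Module.Flat k M] (m : ℕ) :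
    Function.Injective (iota k S M m)
    ∧ Function.Exact (iota k S M m) (delta k S M m)
    ∧ (∀ i, i < m → Function.Exact (delta k S M (i + 1)) (delta k S M i))
    ∧ Function.Surjective (delta k S M 0)
    ∧ Module.Flat k (CC k S M (m + 1)).carrier
    ∧ (∀ i, i ≤ m → Module.Flat k (S ⊗[k] (CC k S M i).carrier))
    ∧ Module.Flat k M := by
  have := flat_CC k S M
  exact ⟨iota_injective k S M m, exact_iota_delta k S M m,
    fun i _ => exact_delta_succ_delta k S M i, mulMap_surjective k S M, this (m + 1),
    fun _ _ => inferInstance, ‹_›⟩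

end Statement4
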